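/- δ₀ m n equals the minimum, over all subsequences e' of e and all alignments γ of e' and f, of the cost of γ, and this minimum is attained: some subsequence e' of e and alignment γ of e' and f have cost exactly δ₀ m n, and no subsequence e' of e admits an alignment with f of cost strictly smaller than δ₀ m n. (This is the lower bound, over all realizations of a sequential uncertain trace, of the optimal alignment cost, corresponding to zero removal cost and no confidence penalties.) -/

import Mathlib

/-!
Call a cost `c` realizable for `(e, f)` when some subsequence of `e` has an alignment with `f` of
cost `c`. Realizable costs are closed under `min` and under appending a log move, a model move,
a synchronous move or a dropped event, which are exactly the branches of the recurrence; so by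
induction `δ₀ i j` is realizable for the prefixes of lengths `i` and `j`.

Conversely, the recurrence makes `δ₀` antitone in `i`. An alignment of a subsequence of
`e.take i` with `f.take j` is peeled off from its last move: if that move uses `e[k]`, the events
`e[k+1], …, e[i-1]` are dropped for free, and the branch of the recurrence matching the move
bounds `δ₀ i j` by the cost.
-/

open scoped NNReal

namespace Stmt2

variable {E F : Type*}

/-- The log projection of a list of moves: first components that are not `none`. -/
def logProj (γ : List (Option E × Option F)) : List E := γ.filterMap Prod.fst

/-- The model projection of a list of moves: second components that are not `none`. -/
def modelProj (γ : List (Option E × Option F)) : List F := γ.filterMap Prod.snd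

/-- `γ` is an alignment of `e` and `f`: a list of moves (no `(none, none)` pairs)
whose log projection is `e` and whose model projection is `f`. -/
def IsAlignment (e : List E) (f : List F) (γ : List (Option E × Option F)) : Prop :=
  (∀ mv ∈ γ, mv ≠ (none, none)) ∧ logProj γ = e ∧ modelProj γ = f

/-- Cost of a single move. -/
def moveCost (PL : E → ℝ≥0) (PM : F → ℝ≥0) (Peq : E → F → ℝ≥0) :
    Option E × Option F → ℝ≥0
  | (some a, none) => PL a
  | (none, some b) => PM b
  | (some a, some b) => Peq a b
  | (none, none) => 0

/-- Cost of an alignment: sum of the costs of its moves. -/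
def alignCost (PL : E → ℝ≥0) (PM : F → ℝ≥0) (Peq : E → F → ℝ≥0)
    (γ : List (Option E × Option F)) : ℝ≥0 :=
  (γ.map (moveCost PL PM Peq)).sum

lemma exists_getElem_of_append_singleton_sublist {α : Type*} {l r : List α} {a : α}
    (h : (l ++ [a]).Sublist r) :
    ∃ (k : ℕ) (hk : k < r.length), r[k] = a ∧ l.Sublist (r.take k) := by
  obtain ⟨r₁, r₂, rfl, hl, ha⟩ := List.append_sublist_iff.mp h
  obtain ⟨s, t, rfl⟩ := List.append_of_mem (List.singleton_sublist.mp ha)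
  refine ⟨(r₁ ++ s).length, by simp, by simp, ?_⟩
  rw [← List.append_assoc, List.take_left]
  exact hl.trans (List.sublist_append_left _ _)

lemma exists_getElem_of_append_singleton_sublist_take {α : Type*} {l e : List α} {a : α} {i : ℕ}
    (h : (l ++ [a]).Sublist (e.take i)) :
    ∃ (k : ℕ) (hk : k < e.length), k < i ∧ e[k] = a ∧ l.Sublist (e.take k) := by
  obtain ⟨k, hk, hka, hl⟩ := exists_getElem_of_append_singleton_sublist h
  rw [List.length_take, lt_min_iff] at hk
  rw [List.take_take, min_eq_left hk.1.le] at hl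
  exact ⟨k, hk.2, hk.1, by simpa using hka, hl⟩

lemma exists_getElem_of_append_singleton_eq_take {α : Type*} {l f : List α} {b : α} {j : ℕ}
    (hj : j ≤ f.length) (h : l ++ [b] = f.take j) :
    ∃ (k : ℕ) (hk : k < f.length), j = k + 1 ∧ f[k] = b ∧ l = f.take k := by
  obtain _ | k := j
  · simp at h
  · have hk : k < f.length := by omega
    rw [List.take_succ_eq_append_getElem hk] at h
    obtain ⟨rfl, hb⟩ := List.append_inj' h rfl
    exact ⟨k, hk, rfl, by simpa using hb.symm, rfl⟩

lemma logProj_append_singleton (γ : List (Option E × Option F)) (mv : Option E × Option F) :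
    logProj (γ ++ [mv]) = logProj γ ++ mv.1.toList := by
  obtain ⟨_ | a, b⟩ := mv <;> simp [logProj]

lemma modelProj_append_singleton (γ : List (Option E × Option F)) (mv : Option E × Option F) :
    modelProj (γ ++ [mv]) = modelProj γ ++ mv.2.toList := by
  obtain ⟨a, _ | b⟩ := mv <;> simp [modelProj]

section Costs

variable {PL : E → ℝ≥0} {PM : F → ℝ≥0} {Peq : E → F → ℝ≥0}

lemma alignCost_append_singleton (γ : List (Option E × Option F)) (mv : Option E × Option F) :
    alignCost PL PM Peq (γ ++ [mv]) = alignCost PL PM Peq γ + moveCost PL PM Peq mv := by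
  simp [alignCost]

variable (PL PM Peq) in
def Realizable (e : List E) (f : List F) (c : ℝ≥0) : Prop :=
  ∃ (e' : List E) (γ : List (Option E × Option F)),
    e'.Sublist e ∧ IsAlignment e' f γ ∧ alignCost PL PM Peq γ = c

namespace Realizable

variable {e : List E} {f : List F} {c c' : ℝ≥0}

lemma nil : Realizable PL PM Peq [] [] 0 :=
  ⟨[], [], .slnil, ⟨by simp, rfl, rfl⟩, rfl⟩

lemma min (h : Realizable PL PM Peq e f c) (h' : Realizable PL PM Peq e f c') :
    Realizable PL PM Peq e f (min c c') := by
  rcases min_choice c c' with hc | hc <;> rw [hc] <;> assumption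

lemma append_move (h : Realizable PL PM Peq e f c) {mv : Option E × Option F}
    (hmv : mv ≠ (none, none)) :
    Realizable PL PM Peq (e ++ mv.1.toList) (f ++ mv.2.toList) (moveCost PL PM Peq mv + c) := by
  obtain ⟨e', γ, hs, ⟨hne, rfl, rfl⟩, rfl⟩ := h
  refine ⟨logProj γ ++ mv.1.toList, γ ++ [mv], hs.append (.refl _), ⟨?_, ?_, ?_⟩, ?_⟩
  · intro mv' hmv'
    rcases List.mem_append.mp hmv' with hγ | hmv'
    · exact hne mv' hγ
    · rwa [List.mem_singleton.mp hmv']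
  · exact logProj_append_singleton γ mv
  · exact modelProj_append_singleton γ mv
  · rw [alignCost_append_singleton, add_comm]

lemma append_drop (h : Realizable PL PM Peq e f c) (a : E) :
    Realizable PL PM Peq (e ++ [a]) f c := by
  obtain ⟨e', γ, hs, hal, hc⟩ := h
  exact ⟨e', γ, hs.trans (List.sublist_append_left _ _), hal, hc⟩

lemma append_log_move (h : Realizable PL PM Peq e f c) (a : E) :
    Realizable PL PM Peq (e ++ [a]) f (PL a + c) := by
  simpa [moveCost] using h.append_move (mv := (some a, none)) (by simp)

lemma append_model_move (h : Realizable PL PM Peq e f c) (b : F) :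
    Realizable PL PM Peq e (f ++ [b]) (PM b + c) := by
  simpa [moveCost] using h.append_move (mv := (none, some b)) (by simp)

lemma append_sync_move (h : Realizable PL PM Peq e f c) (a : E) (b : F) :
    Realizable PL PM Peq (e ++ [a]) (f ++ [b]) (Peq a b + c) := by
  simpa [moveCost] using h.append_move (mv := (some a, some b)) (by simp)

end Realizable

end Costs

structure IsDelta0 (PL : E → ℝ≥0) (PM : F → ℝ≥0) (Peq : E → F → ℝ≥0) (e : List E) (f : List F)
    (δ₀ : ℕ → ℕ → ℝ≥0) : Prop where
  zero_zero : δ₀ 0 0 = 0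
  succ_zero : ∀ i (hi : i < e.length), δ₀ (i + 1) 0 = min (PL e[i] + δ₀ i 0) (δ₀ i 0)
  zero_succ : ∀ j (hj : j < f.length), δ₀ 0 (j + 1) = PM f[j] + δ₀ 0 j
  succ_succ : ∀ i j (hi : i < e.length) (hj : j < f.length),
    δ₀ (i + 1) (j + 1) =
      min (Peq e[i] f[j] + δ₀ i j)
        (min (PL e[i] + δ₀ i (j + 1)) (min (δ₀ i (j + 1)) (PM f[j] + δ₀ (i + 1) j)))

namespace IsDelta0

variable {PL : E → ℝ≥0} {PM : F → ℝ≥0} {Peq : E → F → ℝ≥0} {e : List E} {f : List F}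
  {δ₀ : ℕ → ℕ → ℝ≥0} {i j : ℕ}

lemma succ_left_le (hδ : IsDelta0 PL PM Peq e f δ₀) (hi : i < e.length) (hj : j ≤ f.length) :
    δ₀ (i + 1) j ≤ δ₀ i j := by
  obtain _ | j := j
  · exact hδ.succ_zero i hi ▸ min_le_right _ _
  · rw [hδ.succ_succ i j hi (by omega)]
    exact (min_le_right _ _).trans <| (min_le_right _ _).trans (min_le_left _ _)

lemma antitone_left (hδ : IsDelta0 PL PM Peq e f δ₀) {k : ℕ} (hki : k ≤ i) (hi : i ≤ e.length)
    (hj : j ≤ f.length) : δ₀ i j ≤ δ₀ k j := by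
  induction i, hki using Nat.le_induction with
  | base => rfl
  | succ i _ ih => exact (hδ.succ_left_le (by omega) hj).trans (ih (by omega))

lemma succ_left_le_add (hδ : IsDelta0 PL PM Peq e f δ₀) (hi : i < e.length)
    (hj : j ≤ f.length) : δ₀ (i + 1) j ≤ PL e[i] + δ₀ i j := by
  obtain _ | j := j
  · exact hδ.succ_zero i hi ▸ min_le_left _ _
  · rw [hδ.succ_succ i j hi (by omega)]
    exact (min_le_right _ _).trans (min_le_left _ _)

lemma succ_right_le_add (hδ : IsDelta0 PL PM Peq e f δ₀) (hi : i ≤ e.length)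
    (hj : j < f.length) : δ₀ i (j + 1) ≤ PM f[j] + δ₀ i j := by
  obtain _ | i := i
  · exact (hδ.zero_succ j hj).le
  · rw [hδ.succ_succ i j (by omega) hj]
    exact (min_le_right _ _).trans <| (min_le_right _ _).trans (min_le_right _ _)

lemma succ_succ_le_add (hδ : IsDelta0 PL PM Peq e f δ₀) (hi : i < e.length)
    (hj : j < f.length) : δ₀ (i + 1) (j + 1) ≤ Peq e[i] f[j] + δ₀ i j :=
  hδ.succ_succ i j hi hj ▸ min_le_left _ _

lemma realizable (hδ : IsDelta0 PL PM Peq e f δ₀) :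
    ∀ i ≤ e.length, ∀ j ≤ f.length, Realizable PL PM Peq (e.take i) (f.take j) (δ₀ i j) := by
  intro i
  induction i with
  | zero =>
    intro _ j
    induction j with
    | zero => simpa [hδ.zero_zero] using Realizable.nil
    | succ j ih =>
      intro hj
      rw [List.take_succ_eq_append_getElem hj, hδ.zero_succ j hj]
      exact (ih (by omega)).append_model_move _
  | succ i ihi =>
    intro hi j
    have he := List.take_succ_eq_append_getElem hi
    induction j with
    | zero =>
      intro _
      have hprev := ihi (by omega) 0 (Nat.zero_le _)
      rw [he, hδ.succ_zero i hi]
      exact (hprev.append_log_move _).min (hprev.append_drop _)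
    | succ j ihj =>
      intro hj
      have hf := List.take_succ_eq_append_getElem hj
      have hprev := ihi (by omega) (j + 1) hj
      rw [hδ.succ_succ i j hi hj]
      refine .min ?_ (.min ?_ (.min ?_ ?_))
      · rw [he, hf]; exact (ihi (by omega) j (by omega)).append_sync_move _ _
      · rw [he]; exact hprev.append_log_move _
      · rw [he]; exact hprev.append_drop _
      · rw [hf]; exact (ihj (by omega)).append_model_move _

lemma le_alignCost (hδ : IsDelta0 PL PM Peq e f δ₀) {γ : List (Option E × Option F)}
    (hγ : ∀ mv ∈ γ, mv ≠ (none, none)) (hi : i ≤ e.length) (hj : j ≤ f.length)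
    (hlog : (logProj γ).Sublist (e.take i)) (hmodel : modelProj γ = f.take j) :
    δ₀ i j ≤ alignCost PL PM Peq γ := by
  induction γ using List.reverseRecOn generalizing i j with
  | nil =>
    obtain rfl : j = 0 := by
      rcases List.take_eq_nil_iff.mp hmodel.symm with h | rfl
      · exact h
      · simpa using hj
    simpa [alignCost, hδ.zero_zero] using hδ.antitone_left (Nat.zero_le i) hi (Nat.zero_le _)
  | append_singleton γ mv ih =>
    have hγ' : ∀ mv ∈ γ, mv ≠ (none, none) := fun mv h => hγ mv (List.mem_append_left _ h)
    rw [logProj_append_singleton] at hlog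
    rw [modelProj_append_singleton] at hmodel
    rw [alignCost_append_singleton, add_comm]
    obtain ⟨_ | a, _ | b⟩ := mv
    · exact absurd rfl (hγ _ (List.mem_append_right _ (List.mem_singleton_self _)))
    · obtain ⟨k, hk, rfl, rfl, hγm⟩ := exists_getElem_of_append_singleton_eq_take hj hmodel
      calc δ₀ i (k + 1) ≤ PM f[k] + δ₀ i k := hδ.succ_right_le_add hi hk
        _ ≤ PM f[k] + alignCost PL PM Peq γ := by
          gcongr; exact ih hγ' hi hk.le (by simpa using hlog) hγm
    · obtain ⟨k, hk, hki, rfl, hγl⟩ := exists_getElem_of_append_singleton_sublist_take hlog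
      calc δ₀ i j ≤ δ₀ (k + 1) j := hδ.antitone_left hki hi hj
        _ ≤ PL e[k] + δ₀ k j := hδ.succ_left_le_add hk hj
        _ ≤ PL e[k] + alignCost PL PM Peq γ := by
          gcongr; exact ih hγ' hk.le hj hγl (by simpa using hmodel)
    · obtain ⟨k, hk, hki, rfl, hγl⟩ := exists_getElem_of_append_singleton_sublist_take hlog
      obtain ⟨l, hl, rfl, rfl, hγm⟩ := exists_getElem_of_append_singleton_eq_take hj hmodel
      calc δ₀ i (l + 1) ≤ δ₀ (k + 1) (l + 1) := hδ.antitone_left hki hi hj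
        _ ≤ Peq e[k] f[l] + δ₀ k l := hδ.succ_succ_le_add hk hl
        _ ≤ Peq e[k] f[l] + alignCost PL PM Peq γ := by
          gcongr; exact ih hγ' hk.le hl.le hγl hγm

end IsDelta0

/-- `δ₀ m n` (defined by the recurrence allowing events of `e` to be dropped at zero cost)
is the minimum, over all subsequences `e'` of `e` and all alignments `γ` of `e'` and `f`,
of the cost of `γ`; the minimum is attained, and no subsequence of `e` admits an alignment
with `f` of cost strictly smaller than `δ₀ m n`. -/
theorem delta0_min_cost_over_subsequences
    (PL : E → ℝ≥0) (PM : F → ℝ≥0) (Peq : E → F → ℝ≥0)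
    (e : List E) (f : List F)
    (δ₀ : ℕ → ℕ → ℝ≥0)
    (h00 : δ₀ 0 0 = 0)
    (hi0 : ∀ i (hi : i < e.length),
      δ₀ (i + 1) 0 = min (PL (e[i]'hi) + δ₀ i 0) (δ₀ i 0))
    (h0j : ∀ j (hj : j < f.length), δ₀ 0 (j + 1) = PM (f[j]'hj) + δ₀ 0 j)
    (hij : ∀ i j (hi : i < e.length) (hj : j < f.length),
      δ₀ (i + 1) (j + 1) =
        min (Peq (e[i]'hi) (f[j]'hj) + δ₀ i j)
          (min (PL (e[i]'hi) + δ₀ i (j + 1))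
            (min (δ₀ i (j + 1)) (PM (f[j]'hj) + δ₀ (i + 1) j)))) :
    (∃ (e' : List E) (γ : List (Option E × Option F)),
      e'.Sublist e ∧ IsAlignment e' f γ ∧
        alignCost PL PM Peq γ = δ₀ e.length f.length) ∧
    (∀ (e' : List E) (γ : List (Option E × Option F)),
      e'.Sublist e → IsAlignment e' f γ →
        δ₀ e.length f.length ≤ alignCost PL PM Peq γ) := by
  have hδ : IsDelta0 PL PM Peq e f δ₀ := ⟨h00, hi0, h0j, hij⟩
  constructor
  · have h := hδ.realizable e.length le_rfl f.length le_rfl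
    rwa [List.take_length, List.take_length] at h
  · rintro e' γ hs ⟨hne, hlog, hmodel⟩
    exact hδ.le_alignCost hne le_rfl le_rfl (by simpa [hlog] using hs) (by simpa using hmodel)

end Stmt2
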